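/- For each n ∈ ℕ, let S_1, …, S_n be finite state spaces, P_1^{(n)}, …, P_{n−1}^{(n)} stochastic matrices satisfying: there exist 0 ≤ δ < 1 and s ∈ ℕ with τ(P_k^{(n)}·⋯·P_{k+s}^{(n)}) < δ for all n and all 1 ≤ k ≤ n − s − 1, and let ξ_i^{(n)} : S_i → ℝ be uniformly bounded functions (sup over all n, i, t of |ξ_i^{(n)}(t)| finite). For initial distributions π_n and π̃_n on S_1, let X_i^{(n)} and X̃_i^{(n)} denote the corresponding Markov chains (laws given by π_n(s_1)·∏(P_i^{(n)})_{s_i,s_{i+1}} and π̃_n(s_1)·∏(P_i^{(n)})_{s_i,s_{i+1}} respectively), and set e_n = E(Σ_{k=1}^n ξ_k^{(n)}(X_k^{(n)})), σ_n² = Var(Σ_{k=1}^n ξ_k^{(n)}(X_k^{(n)})), and likewise ẽ_n, σ̃_n² for the chains X̃. Then there exists a constant C, independent of the sequences (π_n) and (π̃_n), such that |e_n − ẽ_n| ≤ C and |σ_n² − σ̃_n²| ≤ C for all n ∈ ℕ. -/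

import Mathlib

open MeasureTheory
open scoped BigOperators Classical

/-- A stochastic matrix: nonnegative entries, each row sums to 1. -/
def IsStochastic {T S : Type} [Fintype S] (P : T → S → ℝ) : Prop :=
  (∀ t s, 0 ≤ P t s) ∧ ∀ t, ∑ s : S, P t s = 1

/-- The contraction (Dobrushin) coefficient of a matrix:
`τ(P) = (1/2)·max_{t₁,t₂} Σ_s |P t₁ s − P t₂ s|`. -/
noncomputable def contractionCoeff {T S : Type} [Fintype T] [Fintype S]
    (P : T → S → ℝ) : ℝ :=
  (1 / 2) * ⨆ t₁ : T, ⨆ t₂ : T, ∑ s : S, |P t₁ s - P t₂ s|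

/-- `matProd P j k` is the product `P_j · P_{j+1} · ⋯ · P_{j+k−1}` of `k` consecutive
transition matrices (the identity matrix if `k = 0`). -/
noncomputable def matProd {S : ℕ → Type} [∀ i, Fintype (S i)]
    (P : (i : ℕ) → S i → S (i + 1) → ℝ) (j : ℕ) : (k : ℕ) → S j → S (j + k) → ℝ
  | 0 => fun t s => if t = s then 1 else 0
  | k + 1 => fun t u => ∑ s : S (j + k), matProd P j k t s * P (j + k) s u

open Matrix

/-!
Dobrushin's inequality `‖ν P‖₁ ≤ τ(P) ‖ν‖₁`, for signed vectors `ν` of total mass zero, makes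
every block of `s + 1` transitions shrink such vectors by the factor `δ`. The marginals of the two
chains at time `k` are the transports of `π` and `π'`, so they differ by `O(δ^((k-1)/(s+1)))` in
`ℓ¹`, and summing over `k` bounds the difference of the means by a geometric series.

For `j ≤ k`, the covariance of `ξ_j(X_j)` and `ξ_k(X_k)` is the pairing of `ξ_k` with the
transport from time `j` to time `k` of the mass-zero vector `m_j (ξ_j - ⟨ξ_j⟩_{m_j})`, where `m_j`
is the marginal at time `j`. For the two chains these vectors differ by `O(δ^((j-1)/(s+1)))`, and
the transport multiplies their difference by `δ^((k-j)/(s+1))`. The double sum of these products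
is at most the square of a geometric series, which bounds the difference of the variances.
-/

section L1
variable {T U : Type} [Fintype T] [Fintype U]

noncomputable def l1Norm (f : T → ℝ) : ℝ := ∑ t, |f t|

lemma l1Norm_nonneg (f : T → ℝ) : 0 ≤ l1Norm f :=
  Finset.sum_nonneg fun t _ => abs_nonneg (f t)

lemma l1Norm_sub_le (f g : T → ℝ) : l1Norm (f - g) ≤ l1Norm f + l1Norm g := by
  rw [l1Norm, l1Norm, l1Norm, ← Finset.sum_add_distrib]
  exact Finset.sum_le_sum fun t _ => abs_sub (f t) (g t)

lemma l1Norm_smul (c : ℝ) (f : T → ℝ) : l1Norm (c • f) = |c| * l1Norm f := by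
  simp [l1Norm, abs_mul, Finset.mul_sum]

lemma l1Norm_eq_one {p : T → ℝ} (hp : ∀ t, 0 ≤ p t) (hp1 : ∑ t, p t = 1) : l1Norm p = 1 := by
  simp [l1Norm, abs_of_nonneg (hp _), hp1]

lemma l1Norm_mul_le {f g : T → ℝ} {M : ℝ} (hg : ∀ t, |g t| ≤ M) :
    l1Norm (f * g) ≤ l1Norm f * M := by
  rw [l1Norm, l1Norm, Finset.sum_mul]
  exact Finset.sum_le_sum fun t _ => by
    rw [Pi.mul_apply, abs_mul]; exact mul_le_mul_of_nonneg_left (hg t) (abs_nonneg _)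

lemma abs_dotProduct_le {f g : T → ℝ} {M : ℝ} (hg : ∀ t, |g t| ≤ M) :
    |f ⬝ᵥ g| ≤ l1Norm f * M :=
  (Finset.abs_sum_le_sum_abs _ _).trans (l1Norm_mul_le hg)

lemma sum_posPart_eq_sum_negPart {ν : T → ℝ} (hν : ∑ t, ν t = 0) :
    ∑ t, (ν t)⁺ = ∑ t, (ν t)⁻ := by
  have h := Finset.sum_sub_distrib (s := Finset.univ) (fun t => (ν t)⁺) (fun t => (ν t)⁻)
  simp only [posPart_sub_negPart, hν] at h
  linarith

/-- The coupling identity behind Dobrushin's bound: a signed vector of mass zero is a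
superposition of differences of point masses. -/
lemma sum_posPart_mul_dotProduct {ν : T → ℝ} (hν : ∑ t, ν t = 0) (x : T → ℝ) :
    (∑ t, (ν t)⁺) * (ν ⬝ᵥ x) = ∑ t₁, ∑ t₂, (ν t₁)⁺ * (ν t₂)⁻ * (x t₁ - x t₂) := by
  have hx : ν ⬝ᵥ x = ∑ t, (ν t)⁺ * x t - ∑ t, (ν t)⁻ * x t := by
    rw [← Finset.sum_sub_distrib]
    exact Finset.sum_congr rfl fun t _ => by rw [← sub_mul, posPart_sub_negPart]
  simp_rw [mul_sub, Finset.sum_sub_distrib]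
  rw [hx, mul_sub]
  congr 1
  · rw [sum_posPart_eq_sum_negPart hν, mul_comm, Finset.sum_mul_sum]
    exact Finset.sum_congr rfl fun _ _ => Finset.sum_congr rfl fun _ _ => by ring
  · rw [Finset.sum_mul_sum]
    exact Finset.sum_congr rfl fun _ _ => Finset.sum_congr rfl fun _ _ => by ring

lemma sum_abs_sub_le_contractionCoeff (R : T → U → ℝ) (t₁ t₂ : T) :
    ∑ u, |R t₁ u - R t₂ u| ≤ 2 * contractionCoeff R := by
  have h₂ := le_ciSup (Set.finite_range fun t => ∑ u, |R t₁ u - R t u|).bddAbove t₂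
  have h₁ := le_ciSup (Set.finite_range fun t' => ⨆ t, ∑ u, |R t' u - R t u|).bddAbove t₁
  rw [contractionCoeff]
  linarith

lemma l1Norm_eq_two_mul_sum_posPart {ν : T → ℝ} (hν : ∑ t, ν t = 0) :
    l1Norm ν = 2 * ∑ t, (ν t)⁺ := by
  simp_rw [l1Norm, ← posPart_add_negPart, Finset.sum_add_distrib, ← sum_posPart_eq_sum_negPart hν]
  ring

lemma sum_posPart_mul_l1Norm_vecMul_le (R : T → U → ℝ) {ν : T → ℝ} (hν : ∑ t, ν t = 0) :
    (∑ t, (ν t)⁺) * l1Norm (ν ᵥ* R) ≤ (∑ t, (ν t)⁺) * (contractionCoeff R * l1Norm ν) := calc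
  (∑ t, (ν t)⁺) * l1Norm (ν ᵥ* R) =
      ∑ u, |∑ t₁, ∑ t₂, (ν t₁)⁺ * (ν t₂)⁻ * (R t₁ u - R t₂ u)| := by
    have hm : 0 ≤ ∑ t, (ν t)⁺ := Finset.sum_nonneg fun t _ => posPart_nonneg _
    rw [l1Norm, Finset.mul_sum]
    refine Finset.sum_congr rfl fun u _ => ?_
    rw [← sum_posPart_mul_dotProduct hν, abs_mul, abs_of_nonneg hm]
    rfl
  _ ≤ ∑ u, ∑ t₁, ∑ t₂, (ν t₁)⁺ * (ν t₂)⁻ * |R t₁ u - R t₂ u| := by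
    refine Finset.sum_le_sum fun u _ => (Finset.abs_sum_le_sum_abs _ _).trans ?_
    refine Finset.sum_le_sum fun t₁ _ => (Finset.abs_sum_le_sum_abs _ _).trans ?_
    refine Finset.sum_le_sum fun t₂ _ => ?_
    rw [abs_mul, abs_mul, abs_of_nonneg (posPart_nonneg _), abs_of_nonneg (negPart_nonneg _)]
  _ = ∑ t₁, ∑ t₂, (ν t₁)⁺ * (ν t₂)⁻ * ∑ u, |R t₁ u - R t₂ u| := by
    simp_rw [Finset.mul_sum]
    rw [Finset.sum_comm]
    exact Finset.sum_congr rfl fun _ _ => Finset.sum_comm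
  _ ≤ ∑ t₁, ∑ t₂, (ν t₁)⁺ * (ν t₂)⁻ * (2 * contractionCoeff R) := by
    gcongr with t₁ _ t₂ _
    exact sum_abs_sub_le_contractionCoeff R t₁ t₂
  _ = (∑ t, (ν t)⁺) * (contractionCoeff R * l1Norm ν) := by
    simp_rw [← Finset.sum_mul, ← Finset.mul_sum, ← sum_posPart_eq_sum_negPart hν, ← Finset.sum_mul,
      l1Norm_eq_two_mul_sum_posPart hν]
    ring

/-- Dobrushin's contraction inequality. -/
lemma l1Norm_vecMul_le_contractionCoeff (R : T → U → ℝ) {ν : T → ℝ} (hν : ∑ t, ν t = 0) :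
    l1Norm (ν ᵥ* R) ≤ contractionCoeff R * l1Norm ν := by
  rcases (Finset.sum_nonneg fun t _ => posPart_nonneg (ν t)).eq_or_lt with hm | hm
  · have hν0 : ∀ t, ν t = 0 := fun t => by
      have : l1Norm ν = 0 := by rw [l1Norm_eq_two_mul_sum_posPart hν, ← hm, mul_zero]
      exact abs_eq_zero.mp ((Finset.sum_eq_zero_iff_of_nonneg fun t _ => abs_nonneg _).mp this t
        (Finset.mem_univ t))
    simp [l1Norm, vecMul, dotProduct, hν0]
  · exact le_of_mul_le_mul_left (sum_posPart_mul_l1Norm_vecMul_le R hν) hm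

end L1

section Centering
variable {T : Type} [Fintype T]

/-- The signed vector `p · (g - ⟨g⟩_p)`: transported by the chain, it yields covariances
(`covariance_eq_flow_dotProduct`). -/
noncomputable def centeredMul (p g : T → ℝ) : T → ℝ := p * g - (p ⬝ᵥ g) • p

lemma sum_centeredMul {p : T → ℝ} (hp : ∑ t, p t = 1) (g : T → ℝ) :
    ∑ t, centeredMul p g t = 0 := by
  simp [centeredMul, Finset.sum_sub_distrib, ← Finset.mul_sum, hp, dotProduct]

lemma l1Norm_centeredMul_sub_le {p q g : T → ℝ} {M : ℝ} (hp : (∀ t, 0 ≤ p t) ∧ ∑ t, p t = 1)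
    (hq : (∀ t, 0 ≤ q t) ∧ ∑ t, q t = 1) (hg : ∀ t, |g t| ≤ M) :
    l1Norm (centeredMul p g - centeredMul q g) ≤ 3 * M * l1Norm (p - q) := by
  have hdecomp : centeredMul p g - centeredMul q g =
      (p - q) * g - ((p - q) ⬝ᵥ g) • p - (q ⬝ᵥ g) • (p - q) := by
    ext t
    simp only [centeredMul, Pi.sub_apply, Pi.mul_apply, Pi.smul_apply, smul_eq_mul, sub_dotProduct]
    ring
  have h₁ : l1Norm ((p - q) * g) ≤ l1Norm (p - q) * M := l1Norm_mul_le hg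
  have h₂ : |(p - q) ⬝ᵥ g| ≤ l1Norm (p - q) * M := abs_dotProduct_le hg
  have h₃ : |q ⬝ᵥ g| ≤ M := by simpa [l1Norm_eq_one hq.1 hq.2] using abs_dotProduct_le (f := q) hg
  have h₄ := l1Norm_sub_le ((p - q) * g - ((p - q) ⬝ᵥ g) • p) ((q ⬝ᵥ g) • (p - q))
  have h₅ := l1Norm_sub_le ((p - q) * g) (((p - q) ⬝ᵥ g) • p)
  rw [l1Norm_smul] at h₄ h₅
  rw [l1Norm_eq_one hp.1 hp.2, mul_one] at h₅
  calc l1Norm (centeredMul p g - centeredMul q g)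
      ≤ l1Norm ((p - q) * g) + |(p - q) ⬝ᵥ g| + |q ⬝ᵥ g| * l1Norm (p - q) := by
        rw [hdecomp]; linarith
    _ ≤ l1Norm (p - q) * M + l1Norm (p - q) * M + M * l1Norm (p - q) := by
        gcongr; exact l1Norm_nonneg _
    _ = 3 * M * l1Norm (p - q) := by ring

end Centering

section Stochastic
variable {T U : Type} [Fintype T] [Fintype U] {R : T → U → ℝ}

lemma IsStochastic.sum_vecMul (hR : IsStochastic R) (ν : T → ℝ) : ∑ u, (ν ᵥ* R) u = ∑ t, ν t := by
  simp only [vecMul, dotProduct]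
  rw [Finset.sum_comm]
  simp [← Finset.mul_sum, hR.2]

lemma IsStochastic.l1Norm_vecMul_le (hR : IsStochastic R) (ν : T → ℝ) :
    l1Norm (ν ᵥ* R) ≤ l1Norm ν := by
  calc l1Norm (ν ᵥ* R) ≤ ∑ u, ((fun t => |ν t|) ᵥ* R) u :=
        Finset.sum_le_sum fun u _ => (Finset.abs_sum_le_sum_abs _ _).trans_eq <|
          Finset.sum_congr rfl fun t _ => by rw [abs_mul, abs_of_nonneg (hR.1 t u)]
    _ = l1Norm ν := hR.sum_vecMul _

lemma IsStochastic.vecMul_nonneg (hR : IsStochastic R) {ν : T → ℝ} (hν : ∀ t, 0 ≤ ν t)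
    (u : U) : 0 ≤ (ν ᵥ* R) u :=
  Finset.sum_nonneg fun t _ => mul_nonneg (hν t) (hR.1 t u)

end Stochastic

lemma IsStochastic.mulVec_one {T U : Type} [Fintype U] {R : T → U → ℝ} (hR : IsStochastic R) :
    (R *ᵥ fun _ => 1) = fun _ => 1 := by
  ext t
  simp [mulVec, dotProduct, hR.2 t]

section Flow
variable {S : ℕ → Type} [∀ i, Fintype (S i)] (A : (i : ℕ) → S i → S (i + 1) → ℝ)

/-- `flow A j ν k` is the vector `ν` placed at time `j` and transported to time `k` by the
transition matrices `A j, …, A (k - 1)`; it is `0` for `k < j`. -/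
noncomputable def flow (j : ℕ) (ν : S j → ℝ) : (k : ℕ) → S k → ℝ
  | 0 => if h : j = 0 then h ▸ ν else 0
  | k + 1 => if h : j = k + 1 then h ▸ ν else flow j ν k ᵥ* A k

@[simp]
lemma flow_self (j : ℕ) (ν : S j → ℝ) : flow A j ν j = ν := by
  cases j <;> simp [flow]

lemma flow_succ {j k : ℕ} (h : j ≤ k) (ν : S j → ℝ) :
    flow A j ν (k + 1) = flow A j ν k ᵥ* A k := by
  simp [flow, show j ≠ k + 1 by omega]

lemma vecMul_matProd_succ (j k : ℕ) (ν : S j → ℝ) :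
    ν ᵥ* matProd A j (k + 1) = (ν ᵥ* matProd A j k) ᵥ* A (j + k) := by
  ext u
  simp only [vecMul, dotProduct, matProd, Finset.mul_sum, Finset.sum_mul, mul_assoc]
  exact Finset.sum_comm

lemma flow_add (j : ℕ) (ν : S j → ℝ) (m : ℕ) : flow A j ν (j + m) = ν ᵥ* matProd A j m := by
  induction m with
  | zero =>
    have : matProd A j 0 = (1 : Matrix (S j) (S j) ℝ) := by
      ext t u; simp [matProd, Matrix.one_apply]
    rw [this, vecMul_one]; exact flow_self A j ν
  | succ m ih =>
    show flow A j ν (j + m + 1) = _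
    rw [flow_succ A (by omega), ih, vecMul_matProd_succ]

lemma flow_flow {j i k : ℕ} (hji : j ≤ i) (hik : i ≤ k) (ν : S j → ℝ) :
    flow A i (flow A j ν i) k = flow A j ν k := by
  induction k, hik using Nat.le_induction with
  | base => exact flow_self A i _
  | succ k hik ih => rw [flow_succ A hik, flow_succ A (hji.trans hik), ih]

lemma flow_sub {j k : ℕ} (h : j ≤ k) (ν ν' : S j → ℝ) :
    flow A j (ν - ν') k = flow A j ν k - flow A j ν' k := by
  obtain ⟨m, rfl⟩ := Nat.exists_eq_add_of_le h
  simp only [flow_add]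
  exact sub_vecMul _ _ _

lemma flow_smul {j k : ℕ} (h : j ≤ k) (c : ℝ) (ν : S j → ℝ) :
    flow A j (c • ν) k = c • flow A j ν k := by
  obtain ⟨m, rfl⟩ := Nat.exists_eq_add_of_le h
  simp only [flow_add]
  exact smul_vecMul _ _ _

variable {A}

lemma sum_flow (hA : ∀ i, IsStochastic (A i)) {j k : ℕ} (h : j ≤ k) (ν : S j → ℝ) :
    ∑ u, flow A j ν k u = ∑ t, ν t := by
  induction k, h using Nat.le_induction with
  | base => rw [flow_self]
  | succ k hjk ih => rw [flow_succ A hjk, (hA k).sum_vecMul, ih]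

lemma l1Norm_flow_le (hA : ∀ i, IsStochastic (A i)) {j k : ℕ} (h : j ≤ k) (ν : S j → ℝ) :
    l1Norm (flow A j ν k) ≤ l1Norm ν := by
  induction k, h using Nat.le_induction with
  | base => rw [flow_self]
  | succ k hjk ih => rw [flow_succ A hjk]; exact ((hA k).l1Norm_vecMul_le _).trans ih

lemma flow_nonneg (hA : ∀ i, IsStochastic (A i)) {j k : ℕ} (h : j ≤ k) {ν : S j → ℝ}
    (hν : ∀ t, 0 ≤ ν t) (u : S k) : 0 ≤ flow A j ν k u := by
  induction k, h using Nat.le_induction with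
  | base => rw [flow_self]; exact hν u
  | succ k hjk ih => rw [flow_succ A hjk]; exact (hA k).vecMul_nonneg ih u

lemma flow_prob (hA : ∀ i, IsStochastic (A i)) {j k : ℕ} (h : j ≤ k) {ν : S j → ℝ}
    (hν : (∀ t, 0 ≤ ν t) ∧ ∑ t, ν t = 1) : (∀ u, 0 ≤ flow A j ν k u) ∧ ∑ u, flow A j ν k u = 1 :=
  ⟨flow_nonneg hA h hν.1, (sum_flow hA h ν).trans hν.2⟩

variable {δ : ℝ} {s n : ℕ}

lemma l1Norm_flow_le_pow (hA : ∀ i, IsStochastic (A i)) (hδ : 0 ≤ δ)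
    (hcontr : ∀ k, 1 ≤ k → k + s + 1 ≤ n → contractionCoeff (matProd A k (s + 1)) ≤ δ)
    (q : ℕ) : ∀ {j k : ℕ} (ν : S j → ℝ), 1 ≤ j → j + (s + 1) * q ≤ k → k ≤ n →
      ∑ t, ν t = 0 → l1Norm (flow A j ν k) ≤ δ ^ q * l1Norm ν := by
  induction q with
  | zero =>
    intro j k ν _ hjk _ _
    simpa using l1Norm_flow_le hA (by omega) ν
  | succ q ih =>
    intro j k ν hj hjk hkn hν
    rw [Nat.mul_succ] at hjk
    set i := j + (s + 1)
    have hflow : flow A j ν i = ν ᵥ* matProd A j (s + 1) := flow_add A j ν (s + 1)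
    have hsum : ∑ t, flow A j ν i t = 0 := by rw [sum_flow hA (by omega), hν]
    have hstep : l1Norm (flow A j ν i) ≤ δ * l1Norm ν := by
      rw [hflow]
      exact (l1Norm_vecMul_le_contractionCoeff _ hν).trans
        (mul_le_mul_of_nonneg_right (hcontr j hj (by omega)) (l1Norm_nonneg ν))
    calc l1Norm (flow A j ν k) = l1Norm (flow A i (flow A j ν i) k) := by
          rw [flow_flow A (by omega) (by omega)]
      _ ≤ δ ^ q * l1Norm (flow A j ν i) := ih _ (by omega) (by omega) hkn hsum
      _ ≤ δ ^ q * (δ * l1Norm ν) := mul_le_mul_of_nonneg_left hstep (pow_nonneg hδ q)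
      _ = δ ^ (q + 1) * l1Norm ν := by ring

lemma l1Norm_flow_le_pow_div (hA : ∀ i, IsStochastic (A i)) (hδ : 0 ≤ δ)
    (hcontr : ∀ k, 1 ≤ k → k + s + 1 ≤ n → contractionCoeff (matProd A k (s + 1)) ≤ δ)
    {j k : ℕ} (hj : 1 ≤ j) (hjk : j ≤ k) (hkn : k ≤ n) {ν : S j → ℝ} (hν : ∑ t, ν t = 0) :
    l1Norm (flow A j ν k) ≤ δ ^ ((k - j) / (s + 1)) * l1Norm ν :=
  l1Norm_flow_le_pow hA hδ hcontr _ ν hj (by have := Nat.mul_div_le (k - j) (s + 1); omega) hkn hν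

lemma l1Norm_flow_sub_flow_le (hA : ∀ i, IsStochastic (A i)) (hδ : 0 ≤ δ)
    (hcontr : ∀ k, 1 ≤ k → k + s + 1 ≤ n → contractionCoeff (matProd A k (s + 1)) ≤ δ)
    {π π' : S 1 → ℝ} (hπ : (∀ t, 0 ≤ π t) ∧ ∑ t, π t = 1) (hπ' : (∀ t, 0 ≤ π' t) ∧ ∑ t, π' t = 1)
    {k : ℕ} (hk : 1 ≤ k) (hkn : k ≤ n) :
    l1Norm (flow A 1 π k - flow A 1 π' k) ≤ 2 * δ ^ ((k - 1) / (s + 1)) := by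
  have hdiff : l1Norm (π - π') ≤ 2 := by
    have := l1Norm_sub_le π π'
    rw [l1Norm_eq_one hπ.1 hπ.2, l1Norm_eq_one hπ'.1 hπ'.2] at this
    linarith
  rw [← flow_sub A hk]
  calc l1Norm (flow A 1 (π - π') k) ≤ δ ^ ((k - 1) / (s + 1)) * l1Norm (π - π') :=
        l1Norm_flow_le_pow_div hA hδ hcontr le_rfl hk hkn
          (by simp [Finset.sum_sub_distrib, hπ.2, hπ'.2])
    _ ≤ 2 * δ ^ ((k - 1) / (s + 1)) := by
        rw [mul_comm]; exact mul_le_mul_of_nonneg_right hdiff (pow_nonneg hδ _)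

lemma abs_flow_centeredMul_sub_le (hA : ∀ i, IsStochastic (A i)) (hδ0 : 0 ≤ δ)
    (hcontr : ∀ k, 1 ≤ k → k + s + 1 ≤ n → contractionCoeff (matProd A k (s + 1)) ≤ δ)
    {ξ : (i : ℕ) → S i → ℝ} {M : ℝ} (hM : 0 ≤ M) (hξ : ∀ i, 1 ≤ i → i ≤ n → ∀ t, |ξ i t| ≤ M)
    {π π' : S 1 → ℝ} (hπ : (∀ t, 0 ≤ π t) ∧ ∑ t, π t = 1) (hπ' : (∀ t, 0 ≤ π' t) ∧ ∑ t, π' t = 1)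
    {j k : ℕ} (hj : 1 ≤ j) (hjk : j ≤ k) (hkn : k ≤ n) :
    |flow A j (centeredMul (flow A 1 π j) (ξ j)) k ⬝ᵥ ξ k -
        flow A j (centeredMul (flow A 1 π' j) (ξ j)) k ⬝ᵥ ξ k| ≤
      6 * M ^ 2 * (δ ^ ((j - 1) / (s + 1)) * δ ^ ((k - j) / (s + 1))) := by
  have hm := flow_prob hA hj hπ (k := j)
  have hm' := flow_prob hA hj hπ' (k := j)
  have hν : ∑ t, (centeredMul (flow A 1 π j) (ξ j) - centeredMul (flow A 1 π' j) (ξ j)) t = 0 := by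
    simp [Finset.sum_sub_distrib, sum_centeredMul hm.2, sum_centeredMul hm'.2]
  have hcenter := l1Norm_centeredMul_sub_le hm hm' (hξ j hj (hjk.trans hkn))
  have hmarg := l1Norm_flow_sub_flow_le hA hδ0 hcontr hπ hπ' hj (hjk.trans hkn)
  rw [← sub_dotProduct, ← flow_sub A hjk]
  calc _ ≤ l1Norm (flow A j (centeredMul (flow A 1 π j) (ξ j) -
          centeredMul (flow A 1 π' j) (ξ j)) k) * M := abs_dotProduct_le (hξ k (hj.trans hjk) hkn)
    _ ≤ δ ^ ((k - j) / (s + 1)) * (3 * M * (2 * δ ^ ((j - 1) / (s + 1)))) * M := by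
        gcongr
        refine (l1Norm_flow_le_pow_div hA hδ0 hcontr hj hjk hkn hν).trans ?_
        gcongr
        exact hcenter.trans (by gcongr)
    _ = _ := by ring

end Flow

lemma sum_mul_sq_sub_eq_sum_sum {V ι : Type} [Fintype V] (w : V → ℝ) (hw : ∑ v, w v = 1)
    (s : Finset ι) (f : ι → V → ℝ) :
    ∑ v, w v * (∑ k ∈ s, f k v - ∑ v', w v' * ∑ k ∈ s, f k v') ^ 2 =
      ∑ j ∈ s, ∑ k ∈ s, (∑ v, w v * (f j v * f k v) -
        (∑ v, w v * f j v) * ∑ v, w v * f k v) := by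
  set e := ∑ v', w v' * ∑ k ∈ s, f k v'
  have he : e = ∑ k ∈ s, ∑ v, w v * f k v := by
    simp_rw [e, Finset.mul_sum]; exact Finset.sum_comm
  have hsq : ∑ v, w v * (∑ k ∈ s, f k v) ^ 2 = ∑ j ∈ s, ∑ k ∈ s, ∑ v, w v * (f j v * f k v) := by
    simp_rw [sq, Finset.sum_mul_sum, Finset.mul_sum]
    rw [Finset.sum_comm]
    exact Finset.sum_congr rfl fun _ _ => Finset.sum_comm
  calc ∑ v, w v * (∑ k ∈ s, f k v - e) ^ 2
      = ∑ v, (w v * (∑ k ∈ s, f k v) ^ 2 - 2 * e * (w v * ∑ k ∈ s, f k v) + e ^ 2 * w v) :=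
        Finset.sum_congr rfl fun _ _ => by ring
    _ = ∑ v, w v * (∑ k ∈ s, f k v) ^ 2 - e ^ 2 := by
        rw [Finset.sum_add_distrib, Finset.sum_sub_distrib, ← Finset.mul_sum, ← Finset.mul_sum, hw]
        ring
    _ = _ := by
        rw [hsq, he, sq, Finset.sum_mul_sum, ← Finset.sum_sub_distrib]
        exact Finset.sum_congr rfl fun _ _ => (Finset.sum_sub_distrib ..).symm

lemma sum_range_pow_div_le {δ : ℝ} (hδ0 : 0 ≤ δ) (hδ1 : δ < 1) {r : ℕ} (hr : 0 < r) (N : ℕ) :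
    ∑ a ∈ Finset.range N, δ ^ (a / r) ≤ r / (1 - δ) := by
  have h1δ : 0 < 1 - δ := by linarith
  induction N using Nat.strong_induction_on with
  | _ N ih =>
    rcases le_or_gt N r with hN | hN
    · calc ∑ a ∈ Finset.range N, δ ^ (a / r) = N := by
            rw [Finset.sum_congr rfl fun a ha => by
              rw [Nat.div_eq_of_lt ((Finset.mem_range.mp ha).trans_le hN), pow_zero]]
            simp
        _ ≤ r := by exact_mod_cast hN
        _ ≤ r / (1 - δ) := le_div_self (Nat.cast_nonneg r) h1δ (by linarith)
    · obtain ⟨N', rfl⟩ := Nat.exists_eq_add_of_lt hN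
      have hhead : ∑ a ∈ Finset.range r, δ ^ (a / r) = r := by
        rw [Finset.sum_congr rfl fun a ha => by
          rw [Nat.div_eq_of_lt (Finset.mem_range.mp ha), pow_zero]]
        simp
      have htail : ∑ a ∈ Finset.range (N' + 1), δ ^ ((r + a) / r) =
          δ * ∑ a ∈ Finset.range (N' + 1), δ ^ (a / r) := by
        rw [Finset.mul_sum]
        exact Finset.sum_congr rfl fun a _ => by rw [Nat.add_div_left a hr, pow_succ, mul_comm]
      rw [show r + N' + 1 = r + (N' + 1) by ring, Finset.sum_range_add, hhead, htail]
      calc (r : ℝ) + δ * ∑ a ∈ Finset.range (N' + 1), δ ^ (a / r)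
          ≤ r + δ * (r / (1 - δ)) := by gcongr; exact ih _ (by omega)
        _ = r / (1 - δ) := by field_simp; ring

lemma sum_Icc_pow_div_le {δ : ℝ} (hδ0 : 0 ≤ δ) (hδ1 : δ < 1) {r : ℕ} (hr : 0 < r) (a n : ℕ) :
    ∑ k ∈ Finset.Icc a n, δ ^ ((k - a) / r) ≤ r / (1 - δ) := by
  rw [← Finset.Ico_add_one_right_eq_Icc, Finset.sum_Ico_eq_sum_range]
  simpa using sum_range_pow_div_le hδ0 hδ1 hr (n + 1 - a)

lemma sum_sum_pow_div_mul_pow_div_le {δ : ℝ} (hδ0 : 0 ≤ δ) (hδ1 : δ < 1) {r : ℕ} (hr : 0 < r)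
    (n : ℕ) :
    ∑ j ∈ Finset.Icc 1 n, ∑ k ∈ Finset.Icc 1 n with j ≤ k, δ ^ ((j - 1) / r) * δ ^ ((k - j) / r) ≤
      (r / (1 - δ)) ^ 2 := by
  have hinner : ∀ j, ∑ k ∈ Finset.Icc 1 n with j ≤ k, δ ^ ((k - j) / r) ≤ r / (1 - δ) := fun j =>
    (Finset.sum_le_sum_of_subset_of_nonneg (fun k hk => by simp at hk ⊢; omega)
      fun _ _ _ => pow_nonneg hδ0 _).trans (sum_Icc_pow_div_le hδ0 hδ1 hr j n)
  calc _ = ∑ j ∈ Finset.Icc 1 n, δ ^ ((j - 1) / r) *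
        ∑ k ∈ Finset.Icc 1 n with j ≤ k, δ ^ ((k - j) / r) := by simp_rw [Finset.mul_sum]
    _ ≤ ∑ j ∈ Finset.Icc 1 n, δ ^ ((j - 1) / r) * (r / (1 - δ)) := by
        gcongr with j
        exact hinner j
    _ = (∑ j ∈ Finset.Icc 1 n, δ ^ ((j - 1) / r)) * (r / (1 - δ)) := (Finset.sum_mul ..).symm
    _ ≤ r / (1 - δ) * (r / (1 - δ)) := by
        gcongr
        exact sum_Icc_pow_div_le hδ0 hδ1 hr 1 n
    _ = _ := (sq _).symm

lemma abs_sum_sum_le_two_mul {ι : Type} [LinearOrder ι] (s : Finset ι) {f g : ι → ι → ℝ}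
    (hf : ∀ j k, f j k = f k j) (hfg : ∀ j ∈ s, ∀ k ∈ s, j ≤ k → |f j k| ≤ g j k) :
    |∑ j ∈ s, ∑ k ∈ s, f j k| ≤ 2 * ∑ j ∈ s, ∑ k ∈ s with j ≤ k, g j k := by
  set B : ι → ι → ℝ := fun j k => if j ≤ k then g j k else 0
  have hB : ∀ j ∈ s, ∀ k ∈ s, 0 ≤ B j k := fun j hj k hk => by
    simp only [B]; split_ifs with h
    · exact (abs_nonneg _).trans (hfg j hj k hk h)
    · exact le_rfl
  have hfB : ∀ j ∈ s, ∀ k ∈ s, |f j k| ≤ B j k + B k j := fun j hj k hk => by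
    rcases le_total j k with h | h
    · have : |f j k| ≤ B j k := by simp only [B, if_pos h]; exact hfg j hj k hk h
      linarith [hB k hk j hj]
    · have : |f j k| ≤ B k j := by simp only [B, if_pos h]; rw [hf]; exact hfg k hk j hj h
      linarith [hB j hj k hk]
  calc |∑ j ∈ s, ∑ k ∈ s, f j k| ≤ ∑ j ∈ s, ∑ k ∈ s, (B j k + B k j) :=
        (Finset.abs_sum_le_sum_abs _ _).trans <| Finset.sum_le_sum fun j hj =>
          (Finset.abs_sum_le_sum_abs _ _).trans <| Finset.sum_le_sum fun k hk => hfB j hj k hk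
    _ = 2 * ∑ j ∈ s, ∑ k ∈ s with j ≤ k, g j k := by
        simp_rw [Finset.sum_add_distrib, Finset.sum_filter]
        rw [Finset.sum_comm (f := fun j k => B k j)]
        ring

section Trajectory
variable {S : ℕ → Type}

/-- Trajectories of the chain up to time `n`: coordinate `i : Fin n` is the state at time
`i + 1`. -/
abbrev Trajectory (S : ℕ → Type) (n : ℕ) : Type := ∀ i : Fin n, S (i + 1)

def Trajectory.snoc {n : ℕ} (w : Trajectory S n) (b : S (n + 1)) : Trajectory S (n + 1) :=
  Fin.snoc (α := fun i : Fin (n + 1) => S (i + 1)) w b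

lemma sum_trajectory_succ [∀ i, Fintype (S i)] {n : ℕ} (f : Trajectory S (n + 1) → ℝ) :
    ∑ v, f v = ∑ w : Trajectory S n, ∑ b : S (n + 1), f (w.snoc b) := by
  rw [← Fintype.sum_equiv (Fin.snocEquiv fun i : Fin (n + 1) => S (i + 1)) _ f (fun _ => rfl),
    Fintype.sum_prod_type, Finset.sum_comm]
  rfl

variable [∀ i, Nonempty (S i)]

/-- A trajectory as a state sequence indexed by time; off `[1, n]` its values are arbitrary. -/
noncomputable def Trajectory.toFun {n : ℕ} (v : Trajectory S n) : (i : ℕ) → S i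
  | 0 => Classical.arbitrary _
  | i + 1 => if h : i < n then v ⟨i, h⟩ else Classical.arbitrary _

lemma Trajectory.toFun_snoc_of_le {n : ℕ} (w : Trajectory S n) (b : S (n + 1)) {i : ℕ}
    (h : i ≤ n) : (w.snoc b).toFun i = w.toFun i := by
  cases i with
  | zero => rfl
  | succ i =>
    simp only [Trajectory.toFun, dif_pos (show i < n by omega), dif_pos (show i < n + 1 by omega)]
    exact Fin.snoc_castSucc (α := fun i : Fin (n + 1) => S (i + 1)) b w ⟨i, by omega⟩

lemma Trajectory.toFun_snoc_self {n : ℕ} (w : Trajectory S n) (b : S (n + 1)) :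
    (w.snoc b).toFun (n + 1) = b := by
  simp only [Trajectory.toFun, dif_pos (Nat.lt_succ_self n)]
  exact Fin.snoc_last (α := fun i : Fin (n + 1) => S (i + 1)) b w

lemma Trajectory.toFun_succ {n : ℕ} (v : Trajectory S n) (i : Fin n) : v.toFun (i + 1) = v i := by
  simp [Trajectory.toFun, i.2]

lemma Trajectory.toFun_eq_iff {n : ℕ} (v : Trajectory S n) (t : (i : ℕ) → S i) :
    (∀ i ∈ Finset.Icc 1 n, t i = v.toFun i) ↔ v = fun i : Fin n => t (i + 1) := by
  constructor
  · intro h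
    funext i
    rw [h (i + 1) (by simp), v.toFun_succ]
  · rintro rfl i hi
    obtain ⟨j, rfl⟩ : ∃ j, i = j + 1 := ⟨i - 1, by simp at hi; omega⟩
    exact (Trajectory.toFun_succ (fun i : Fin n => t (i + 1)) ⟨j, by simp at hi; omega⟩).symm

end Trajectory

def partialSum {S : ℕ → Type} (ξ : (i : ℕ) → S i → ℝ) (n : ℕ) (t : (i : ℕ) → S i) : ℝ :=
  ∑ k ∈ Finset.Icc 1 n, ξ k (t k)

lemma partialSum_congr {S : ℕ → Type} (ξ : (i : ℕ) → S i → ℝ) (n : ℕ) {t t' : (i : ℕ) → S i}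
    (h : ∀ i ∈ Finset.Icc 1 n, t i = t' i) : partialSum ξ n t = partialSum ξ n t' :=
  Finset.sum_congr rfl fun k hk => by rw [h k hk]

section Expectation
variable {S : ℕ → Type} [∀ i, Nonempty (S i)] (A : (i : ℕ) → S i → S (i + 1) → ℝ) (π : S 1 → ℝ)

noncomputable def trajectoryWeight (n : ℕ) (v : Trajectory S n) : ℝ :=
  π (v.toFun 1) * ∏ i ∈ Finset.Ico 1 n, A i (v.toFun i) (v.toFun (i + 1))

lemma trajectoryWeight_snoc {n : ℕ} (hn : 1 ≤ n) (w : Trajectory S n) (b : S (n + 1)) :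
    trajectoryWeight A π (n + 1) (w.snoc b) = trajectoryWeight A π n w * A n (w.toFun n) b := by
  have hsnoc : ∀ i ≤ n, (w.snoc b).toFun i = w.toFun i := fun i hi => w.toFun_snoc_of_le b hi
  have hprod : ∏ i ∈ Finset.Ico 1 n, A i ((w.snoc b).toFun i) ((w.snoc b).toFun (i + 1)) =
      ∏ i ∈ Finset.Ico 1 n, A i (w.toFun i) (w.toFun (i + 1)) :=
    Finset.prod_congr rfl fun i hi => by
      have := Finset.mem_Ico.mp hi
      rw [hsnoc i (by omega), hsnoc (i + 1) (by omega)]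
  rw [trajectoryWeight, trajectoryWeight, Finset.prod_Ico_succ_top hn, hsnoc 1 hn, hsnoc n le_rfl,
    w.toFun_snoc_self, hprod, mul_assoc]

variable [∀ i, Fintype (S i)]

noncomputable def trajectoryExp (n : ℕ) (F : ((i : ℕ) → S i) → ℝ) : ℝ :=
  ∑ v : Trajectory S n, trajectoryWeight A π n v * F v.toFun

/-- The Markov property, in the form that integrates out the last state. -/
lemma trajectoryExp_succ {k : ℕ} (hk : 1 ≤ k) (F : ((i : ℕ) → S i) → ℝ)
    (hF : ∀ t t' : (i : ℕ) → S i, (∀ i ≤ k, t i = t' i) → F t = F t') (H : S (k + 1) → ℝ) :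
    trajectoryExp A π (k + 1) (fun t => F t * H (t (k + 1))) =
      trajectoryExp A π k (fun t => F t * (A k *ᵥ H) (t k)) := by
  rw [trajectoryExp, trajectoryExp, sum_trajectory_succ]
  refine Finset.sum_congr rfl fun w _ => ?_
  have hFw : ∀ b, F (w.snoc b).toFun = F w.toFun :=
    fun b => hF _ _ fun i hi => w.toFun_snoc_of_le b hi
  simp only [trajectoryWeight_snoc A π hk, Trajectory.toFun_snoc_self, hFw, mulVec, dotProduct,
    Finset.mul_sum]
  exact Finset.sum_congr rfl fun b _ => by ring

lemma trajectoryExp_sum {n : ℕ} {ι : Type} (s : Finset ι) (f : ι → ((i : ℕ) → S i) → ℝ) :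
    trajectoryExp A π n (fun t => ∑ k ∈ s, f k t) = ∑ k ∈ s, trajectoryExp A π n (f k) := by
  simp_rw [trajectoryExp, Finset.mul_sum]
  exact Finset.sum_comm

variable {A}

lemma trajectoryExp_of_le (hA : ∀ i, IsStochastic (A i)) {k n : ℕ} (hk : 1 ≤ k) (hkn : k ≤ n)
    (F : ((i : ℕ) → S i) → ℝ) (hF : ∀ t t' : (i : ℕ) → S i, (∀ i ≤ k, t i = t' i) → F t = F t') :
    trajectoryExp A π n F = trajectoryExp A π k F := by
  induction n, hkn using Nat.le_induction with
  | base => rfl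
  | succ n hkn ih =>
    have h := trajectoryExp_succ A π (hk.trans hkn) F
      (fun t t' h => hF t t' fun i hi => h i (hi.trans hkn)) fun _ => 1
    simp only [mul_one, (hA n).mulVec_one] at h
    rw [h, ih]

lemma trajectoryExp_eval_self {k : ℕ} (hk : 1 ≤ k)
    (H : S k → ℝ) : trajectoryExp A π k (fun t => H (t k)) = flow A 1 π k ⬝ᵥ H := by
  induction k, hk using Nat.le_induction with
  | base =>
    rw [trajectoryExp, sum_trajectory_succ, Fintype.sum_unique]
    simp [trajectoryWeight, Trajectory.toFun_snoc_self, dotProduct]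
  | succ k hk ih =>
    have h := trajectoryExp_succ A π hk (fun _ => 1) (fun _ _ _ => rfl) H
    simp only [one_mul] at h
    rw [h, ih, flow_succ A hk]
    exact dotProduct_mulVec _ _ _

lemma trajectoryExp_eval_mul_eval_self {j k : ℕ} (hj : 1 ≤ j) (hjk : j ≤ k)
    (G : S j → ℝ) (H : S k → ℝ) :
    trajectoryExp A π k (fun t => G (t j) * H (t k)) = flow A j (flow A 1 π j * G) k ⬝ᵥ H := by
  induction k, hjk using Nat.le_induction with
  | base =>
    have hassoc : (flow A 1 π j * G) ⬝ᵥ H = flow A 1 π j ⬝ᵥ (G * H) := by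
      simp only [dotProduct, Pi.mul_apply, mul_assoc]
    rw [flow_self, hassoc]
    exact trajectoryExp_eval_self π hj (G * H)
  | succ k hjk ih =>
    rw [trajectoryExp_succ A π (hj.trans hjk) (fun t => G (t j))
      (fun t t' h => by rw [h j hjk]) H, ih, flow_succ A hjk]
    exact dotProduct_mulVec _ _ _

lemma trajectoryExp_eval (hA : ∀ i, IsStochastic (A i)) {k n : ℕ} (hk : 1 ≤ k) (hkn : k ≤ n)
    (H : S k → ℝ) : trajectoryExp A π n (fun t => H (t k)) = flow A 1 π k ⬝ᵥ H := by
  rw [trajectoryExp_of_le π hA hk hkn _ fun t t' h => by rw [h k le_rfl],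
    trajectoryExp_eval_self π hk]

lemma trajectoryExp_eval_mul_eval (hA : ∀ i, IsStochastic (A i)) {j k n : ℕ} (hj : 1 ≤ j)
    (hjk : j ≤ k) (hkn : k ≤ n) (G : S j → ℝ) (H : S k → ℝ) :
    trajectoryExp A π n (fun t => G (t j) * H (t k)) = flow A j (flow A 1 π j * G) k ⬝ᵥ H := by
  rw [trajectoryExp_of_le π hA (hj.trans hjk) hkn _ fun t t' h => by
      rw [h j hjk, h k le_rfl],
    trajectoryExp_eval_mul_eval_self π hj hjk]

lemma trajectoryExp_one (hA : ∀ i, IsStochastic (A i)) (hπ : ∑ t, π t = 1) {n : ℕ} (hn : 1 ≤ n) :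
    trajectoryExp A π n (fun _ => 1) = 1 := by
  simpa [dotProduct, hπ] using trajectoryExp_eval π hA le_rfl hn fun _ => 1

lemma covariance_eq_flow_dotProduct (hA : ∀ i, IsStochastic (A i)) {j k n : ℕ} (hj : 1 ≤ j)
    (hjk : j ≤ k) (hkn : k ≤ n) (G : S j → ℝ) (H : S k → ℝ) :
    trajectoryExp A π n (fun t => G (t j) * H (t k)) -
        trajectoryExp A π n (fun t => G (t j)) * trajectoryExp A π n (fun t => H (t k)) =
      flow A j (centeredMul (flow A 1 π j) G) k ⬝ᵥ H := by
  rw [trajectoryExp_eval_mul_eval π hA hj hjk hkn, trajectoryExp_eval π hA hj (hjk.trans hkn),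
    trajectoryExp_eval π hA (hj.trans hjk) hkn, centeredMul, flow_sub A hjk, flow_smul A hjk,
    flow_flow A hj hjk, sub_dotProduct, smul_dotProduct, smul_eq_mul]

end Expectation

section Integral
variable {S : ℕ → Type} [∀ i, Fintype (S i)] [∀ i, Nonempty (S i)]
  {A : (i : ℕ) → S i → S (i + 1) → ℝ} {π : S 1 → ℝ}
  {Ω : Type} [MeasurableSpace Ω] (μ : Measure Ω) [IsFiniteMeasure μ] {X : (i : ℕ) → Ω → S i}
  {n : ℕ}

lemma integral_eq_trajectoryExp (hX : ∀ i, @Measurable Ω (S i) _ ⊤ (X i))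
    (hlaw : ∀ t : (i : ℕ) → S i, (μ {ω | ∀ i ∈ Finset.Icc 1 n, X i ω = t i}).toReal =
      π (t 1) * ∏ i ∈ Finset.Ico 1 n, A i (t i) (t (i + 1)))
    (F : ((i : ℕ) → S i) → ℝ)
    (hF : ∀ t t' : (i : ℕ) → S i, (∀ i ∈ Finset.Icc 1 n, t i = t' i) → F t = F t') :
    ∫ ω, F (fun i => X i ω) ∂μ = trajectoryExp A π n F := by
  set cyl : Trajectory S n → Set Ω := fun v => {ω | ∀ i ∈ Finset.Icc 1 n, X i ω = v.toFun i}
  have hcyl : ∀ v, MeasurableSet (cyl v) := fun v => by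
    simp only [cyl, Set.ofPred_forall]
    exact .biInter (Set.to_countable _) fun i _ =>
      hX i (MeasurableSpace.measurableSet_top (s := {v.toFun i}))
  have hsplit : (fun ω => F (fun i => X i ω)) =
      fun ω => ∑ v, (cyl v).indicator (fun _ => F v.toFun) ω := by
    funext ω
    have hω : ∀ v, ω ∈ cyl v ↔ v = fun i : Fin n => X (i + 1) ω :=
      fun v => v.toFun_eq_iff fun i => X i ω
    rw [Finset.sum_eq_single_of_mem _ (Finset.mem_univ (fun i : Fin n => X (i + 1) ω))
      fun v _ hv => Set.indicator_of_notMem (mt (hω v).mp hv) _,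
      Set.indicator_of_mem ((hω _).mpr rfl)]
    exact hF _ _ ((Trajectory.toFun_eq_iff _ _).mpr rfl)
  rw [hsplit, integral_finsetSum _ fun v _ => (integrable_const _).indicator (hcyl v)]
  refine Finset.sum_congr rfl fun v _ => ?_
  rw [integral_indicator_const _ (hcyl v), smul_eq_mul, measureReal_def, hlaw]
  rfl

lemma integral_sum_eq_trajectoryExp (hX : ∀ i, @Measurable Ω (S i) _ ⊤ (X i))
    (hlaw : ∀ t : (i : ℕ) → S i, (μ {ω | ∀ i ∈ Finset.Icc 1 n, X i ω = t i}).toReal =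
      π (t 1) * ∏ i ∈ Finset.Ico 1 n, A i (t i) (t (i + 1)))
    (ξ : (i : ℕ) → S i → ℝ) :
    ∫ ω, (∑ k ∈ Finset.Icc 1 n, ξ k (X k ω)) ∂μ = trajectoryExp A π n (partialSum ξ n) :=
  integral_eq_trajectoryExp μ hX hlaw (partialSum ξ n) fun _ _ => partialSum_congr ξ n

lemma integral_sum_sub_sq_eq_trajectoryExp (hX : ∀ i, @Measurable Ω (S i) _ ⊤ (X i))
    (hlaw : ∀ t : (i : ℕ) → S i, (μ {ω | ∀ i ∈ Finset.Icc 1 n, X i ω = t i}).toReal =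
      π (t 1) * ∏ i ∈ Finset.Ico 1 n, A i (t i) (t (i + 1)))
    (ξ : (i : ℕ) → S i → ℝ) :
    ∫ ω, ((∑ k ∈ Finset.Icc 1 n, ξ k (X k ω)) -
        ∫ ω', (∑ k ∈ Finset.Icc 1 n, ξ k (X k ω')) ∂μ) ^ 2 ∂μ =
      trajectoryExp A π n
        (fun t => (partialSum ξ n t - trajectoryExp A π n (partialSum ξ n)) ^ 2) := by
  rw [integral_sum_eq_trajectoryExp μ hX hlaw]
  exact integral_eq_trajectoryExp μ hX hlaw
    (fun t => (partialSum ξ n t - trajectoryExp A π n (partialSum ξ n)) ^ 2)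
    fun _ _ h => by rw [partialSum_congr ξ n h]

end Integral

section Estimates
variable {S : ℕ → Type} [∀ i, Fintype (S i)] [∀ i, Nonempty (S i)]
  {A : (i : ℕ) → S i → S (i + 1) → ℝ} {δ : ℝ} {s n : ℕ} {ξ : (i : ℕ) → S i → ℝ} {M : ℝ}
  {π π' : S 1 → ℝ}

lemma abs_trajectoryExp_partialSum_sub_le (hA : ∀ i, IsStochastic (A i)) (hδ0 : 0 ≤ δ)
    (hδ1 : δ < 1)
    (hcontr : ∀ k, 1 ≤ k → k + s + 1 ≤ n → contractionCoeff (matProd A k (s + 1)) ≤ δ)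
    (hM : 0 ≤ M) (hξ : ∀ i, 1 ≤ i → i ≤ n → ∀ t, |ξ i t| ≤ M)
    (hπ : (∀ t, 0 ≤ π t) ∧ ∑ t, π t = 1) (hπ' : (∀ t, 0 ≤ π' t) ∧ ∑ t, π' t = 1) :
    |trajectoryExp A π n (partialSum ξ n) - trajectoryExp A π' n (partialSum ξ n)| ≤
      2 * M * ((s + 1) / (1 - δ)) := by
  have hterm : ∀ k ∈ Finset.Icc 1 n,
      |trajectoryExp A π n (fun t => ξ k (t k)) - trajectoryExp A π' n (fun t => ξ k (t k))| ≤
        2 * M * δ ^ ((k - 1) / (s + 1)) := fun k hk => by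
    obtain ⟨hk, hkn⟩ := Finset.mem_Icc.mp hk
    rw [trajectoryExp_eval π hA hk hkn, trajectoryExp_eval π' hA hk hkn, ← sub_dotProduct]
    calc _ ≤ l1Norm (flow A 1 π k - flow A 1 π' k) * M := abs_dotProduct_le (hξ k hk hkn)
      _ ≤ 2 * δ ^ ((k - 1) / (s + 1)) * M := mul_le_mul_of_nonneg_right
          (l1Norm_flow_sub_flow_le hA hδ0 hcontr hπ hπ' hk hkn) hM
      _ = _ := by ring
  unfold partialSum
  rw [trajectoryExp_sum, trajectoryExp_sum, ← Finset.sum_sub_distrib]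
  calc _ ≤ ∑ k ∈ Finset.Icc 1 n, 2 * M * δ ^ ((k - 1) / (s + 1)) :=
        (Finset.abs_sum_le_sum_abs _ _).trans (Finset.sum_le_sum hterm)
    _ ≤ 2 * M * ((s + 1) / (1 - δ)) := by
        rw [← Finset.mul_sum]
        gcongr
        exact_mod_cast sum_Icc_pow_div_le hδ0 hδ1 (by omega : 0 < s + 1) 1 n

lemma abs_variance_sub_le (hA : ∀ i, IsStochastic (A i)) (hδ0 : 0 ≤ δ) (hδ1 : δ < 1)
    (hcontr : ∀ k, 1 ≤ k → k + s + 1 ≤ n → contractionCoeff (matProd A k (s + 1)) ≤ δ)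
    (hn : 1 ≤ n) (hM : 0 ≤ M) (hξ : ∀ i, 1 ≤ i → i ≤ n → ∀ t, |ξ i t| ≤ M)
    (hπ : (∀ t, 0 ≤ π t) ∧ ∑ t, π t = 1) (hπ' : (∀ t, 0 ≤ π' t) ∧ ∑ t, π' t = 1) :
    |trajectoryExp A π n (fun t => (partialSum ξ n t - trajectoryExp A π n (partialSum ξ n)) ^ 2) -
        trajectoryExp A π' n
          (fun t => (partialSum ξ n t - trajectoryExp A π' n (partialSum ξ n)) ^ 2)| ≤
      12 * M ^ 2 * ((s + 1) / (1 - δ)) ^ 2 := by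
  set cov : (S 1 → ℝ) → ℕ → ℕ → ℝ := fun ρ j k =>
    trajectoryExp A ρ n (fun t => ξ j (t j) * ξ k (t k)) -
      trajectoryExp A ρ n (fun t => ξ j (t j)) * trajectoryExp A ρ n (fun t => ξ k (t k))
  have hvar : ∀ ρ : S 1 → ℝ, ∑ t, ρ t = 1 →
      trajectoryExp A ρ n (fun t => (partialSum ξ n t - trajectoryExp A ρ n (partialSum ξ n)) ^ 2) =
        ∑ j ∈ Finset.Icc 1 n, ∑ k ∈ Finset.Icc 1 n, cov ρ j k := fun ρ hρ =>
    sum_mul_sq_sub_eq_sum_sum _ (by simpa [trajectoryExp] using trajectoryExp_one ρ hA hρ hn) _ _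
  have hsymm : ∀ ρ j k, cov ρ j k = cov ρ k j := fun ρ j k => by
    simp only [cov, mul_comm (ξ j _)]
    ring
  have hcov : ∀ j ∈ Finset.Icc 1 n, ∀ k ∈ Finset.Icc 1 n, j ≤ k →
      |cov π j k - cov π' j k| ≤ 6 * M ^ 2 * (δ ^ ((j - 1) / (s + 1)) * δ ^ ((k - j) / (s + 1))) :=
    fun j hj k hk hjk => by
      obtain ⟨hj, -⟩ := Finset.mem_Icc.mp hj
      obtain ⟨-, hkn⟩ := Finset.mem_Icc.mp hk
      simp only [cov]
      rw [covariance_eq_flow_dotProduct π hA hj hjk hkn,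
        covariance_eq_flow_dotProduct π' hA hj hjk hkn]
      exact abs_flow_centeredMul_sub_le hA hδ0 hcontr hM hξ hπ hπ' hj hjk hkn
  have hgeom := sum_sum_pow_div_mul_pow_div_le hδ0 hδ1 (by omega : 0 < s + 1) n
  push_cast at hgeom
  rw [hvar π hπ.2, hvar π' hπ'.2, ← Finset.sum_sub_distrib]
  simp_rw [← Finset.sum_sub_distrib]
  refine (abs_sum_sum_le_two_mul _ (fun j k => by rw [hsymm π, hsymm π']) hcov).trans ?_
  calc _ = 12 * M ^ 2 * ∑ j ∈ Finset.Icc 1 n, ∑ k ∈ Finset.Icc 1 n with j ≤ k,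
          δ ^ ((j - 1) / (s + 1)) * δ ^ ((k - j) / (s + 1)) := by
        simp_rw [Finset.mul_sum]
        exact Finset.sum_congr rfl fun j _ => Finset.sum_congr rfl fun k _ => by ring
    _ ≤ _ := by gcongr

end Estimates

/-- The expectations and variances of bounded functionals of a contracting array of
finite-state Markov chains differ by a uniformly bounded amount when the initial
distribution is changed: the constant `C` depends only on the transition matrices,
the functions `ξ`, and the contraction data. -/
theorem stmt12 (S : ℕ → Type) [∀ i, Fintype (S i)] [∀ i, Nonempty (S i)]
    (P : (n : ℕ) → (i : ℕ) → S i → S (i + 1) → ℝ)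
    (hP : ∀ n i, IsStochastic (P n i))
    (δ : ℝ) (hδ0 : 0 ≤ δ) (hδ1 : δ < 1) (s : ℕ)
    (hcontr : ∀ n k : ℕ, 1 ≤ k → k + s + 1 ≤ n →
      contractionCoeff (matProd (P n) k (s + 1)) < δ)
    (ξ : (n : ℕ) → (i : ℕ) → S i → ℝ)
    (M : ℝ) (hξ : ∀ n : ℕ, ∀ i : ℕ, 1 ≤ i → i ≤ n → ∀ t : S i, |ξ n i t| ≤ M) :
    ∃ C : ℝ, ∀ (n : ℕ) (Ω Ω' : Type) [MeasurableSpace Ω] [MeasurableSpace Ω']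
      (μ : Measure Ω) (μ' : Measure Ω'),
      IsProbabilityMeasure μ → IsProbabilityMeasure μ' →
      ∀ (X : (i : ℕ) → Ω → S i) (X' : (i : ℕ) → Ω' → S i) (π π' : S 1 → ℝ),
        ((∀ t, 0 ≤ π t) ∧ ∑ t : S 1, π t = 1) →
        ((∀ t, 0 ≤ π' t) ∧ ∑ t : S 1, π' t = 1) →
        (∀ i, @Measurable Ω (S i) _ ⊤ (X i)) →
        (∀ i, @Measurable Ω' (S i) _ ⊤ (X' i)) →
        (∀ t : (i : ℕ) → S i,
          (μ {ω | ∀ i ∈ Finset.Icc 1 n, X i ω = t i}).toReal =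
            π (t 1) * ∏ i ∈ Finset.Ico 1 n, P n i (t i) (t (i + 1))) →
        (∀ t : (i : ℕ) → S i,
          (μ' {ω | ∀ i ∈ Finset.Icc 1 n, X' i ω = t i}).toReal =
            π' (t 1) * ∏ i ∈ Finset.Ico 1 n, P n i (t i) (t (i + 1))) →
        |(∫ ω, (∑ k ∈ Finset.Icc 1 n, ξ n k (X k ω)) ∂μ) -
            (∫ ω, (∑ k ∈ Finset.Icc 1 n, ξ n k (X' k ω)) ∂μ')| ≤ C ∧
        |(∫ ω, ((∑ k ∈ Finset.Icc 1 n, ξ n k (X k ω)) -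
              ∫ ω', (∑ k ∈ Finset.Icc 1 n, ξ n k (X k ω')) ∂μ) ^ 2 ∂μ) -
            (∫ ω, ((∑ k ∈ Finset.Icc 1 n, ξ n k (X' k ω)) -
              ∫ ω', (∑ k ∈ Finset.Icc 1 n, ξ n k (X' k ω')) ∂μ') ^ 2 ∂μ')| ≤ C := by
  refine ⟨max (2 * M * ((s + 1) / (1 - δ))) (12 * M ^ 2 * ((s + 1) / (1 - δ)) ^ 2), ?_⟩
  intro n Ω Ω' _ _ μ μ' _ _ X X' π π' hπ hπ' hX hX' hlaw hlaw'
  rcases Nat.eq_zero_or_pos n with rfl | hn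
  · have hC : 0 ≤ max (2 * M * ((s + 1) / (1 - δ))) (12 * M ^ 2 * ((s + 1) / (1 - δ)) ^ 2) :=
      le_max_of_le_right (by positivity)
    simp [hC]
  have hM : 0 ≤ M := (abs_nonneg _).trans (hξ n 1 le_rfl hn (Classical.arbitrary _))
  have hcontr' := fun k h₁ h₂ => (hcontr n k h₁ h₂).le
  rw [integral_sum_sub_sq_eq_trajectoryExp μ hX hlaw,
    integral_sum_sub_sq_eq_trajectoryExp μ' hX' hlaw',
    integral_sum_eq_trajectoryExp μ hX hlaw, integral_sum_eq_trajectoryExp μ' hX' hlaw']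
  exact ⟨(abs_trajectoryExp_partialSum_sub_le (hP n) hδ0 hδ1 hcontr' hM (hξ n) hπ hπ').trans
      (le_max_left _ _),
    (abs_variance_sub_le (hP n) hδ0 hδ1 hcontr' hn hM (hξ n) hπ hπ').trans (le_max_right _ _)⟩
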